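/- arXiv:1610.07528 — 2 statements merged into one kernel-verified Lean document; each statement's English description precedes it below -/
import Mathlib

section
/- Let x ∈ ℤ with x ≠ 0 and A = (0 1; 1 x) ∈ GL₂ℤ (an orientation-reversing hyperbolic matrix, det A = −1). Then the subgroup H_A of GL₂ℤ generated by A and −Id acts transitively on the set S_A = {v ∈ ℤ² : ℤv + ℤ(Av) = ℤ²} = {(a,b) ∈ ℤ² : a² + xab − b² = ±1}. -/
open Matrix

abbrev GL2Z := GL (Fin 2) ℤ

/-- `S_A = {v ∈ ℤ² : ℤv + ℤ(Av) = ℤ²}`. -/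
def SA (A : GL2Z) : Set (Fin 2 → ℤ) :=
  {v | Submodule.span ℤ {v, (A : Matrix (Fin 2) (Fin 2) ℤ).mulVec v} = ⊤}

/-- `H_A = ⟨A, -Id⟩ ≤ GL₂ℤ`. -/
def HA (A : GL2Z) : Subgroup GL2Z := Subgroup.closure {A, -1}

/-!
The span of `v = (a, b)` and `Av = (b, a + x b)` is `ℤ²` exactly when
`det (v, Av) = a² + x a b - b²` is a unit. This form changes sign under `A` and `-1`, so
`H_A` preserves its unit locus. If `a b ≠ 0`, one of `Av` and `A⁻¹v = (b - x a, a)` has a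
smaller `a² + b²`: otherwise `|a (a + x b)| ≥ a²` and `|b (b - x a)| ≥ b²`, and since these
products are `b² ± 1` and `a² ∓ 1` they force `x a b = 0`, leaving `a² - b² = ±1` with
`a b ≠ 0`, which is impossible. Descending, every solution reaches `(±1, 0)` or `(0, ±1)`,
hence `(1, 0)`.
-/

theorem span_pair_eq_top_iff_isUnit {R : Type*} [CommRing R] (v w : Fin 2 → R) :
    Submodule.span R {v, w} = ⊤ ↔ IsUnit (v 0 * w 1 - v 1 * w 0) := by
  constructor
  · intro h
    obtain ⟨a, b, hab⟩ :=
      Submodule.mem_span_pair.1 (h.ge (Submodule.mem_top (x := Pi.single 0 1)))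
    obtain ⟨c, d, hcd⟩ :=
      Submodule.mem_span_pair.1 (h.ge (Submodule.mem_top (x := Pi.single 1 1)))
    have e₁ := congrFun hab 0
    have e₂ := congrFun hab 1
    have e₄ := congrFun hcd 1
    simp only [Pi.add_apply, Pi.smul_apply, smul_eq_mul, Pi.single_eq_same,
      Pi.single_eq_of_ne one_ne_zero] at e₁ e₂ e₄
    refine IsUnit.of_mul_eq_one (a * d - b * c) ?_
    linear_combination (c * v 1 + d * w 1) * e₁ + e₄ - (c * v 0 + d * w 0) * e₂
  · intro h
    obtain ⟨c, hc⟩ := h.exists_left_inv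
    rw [eq_top_iff, ← (Pi.basisFun R (Fin 2)).span_eq, Submodule.span_le, Set.range_subset_iff,
      Fin.forall_fin_two]
    simp only [Pi.basisFun_apply, SetLike.mem_coe, Submodule.mem_span_pair]
    refine ⟨⟨c * w 1, -(c * v 1), funext (Fin.forall_fin_two.2 ⟨?_, ?_⟩)⟩,
      ⟨-(c * w 0), c * v 0, funext (Fin.forall_fin_two.2 ⟨?_, ?_⟩)⟩⟩ <;>
    simp only [Pi.add_apply, Pi.smul_apply, smul_eq_mul, Pi.single_eq_same,
      Pi.single_eq_of_ne zero_ne_one, Pi.single_eq_of_ne one_ne_zero]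
    · linear_combination hc
    · ring
    · ring
    · linear_combination hc

theorem Int.eq_zero_or_eq_zero_of_isUnit_sq_sub_sq {a b : ℤ} (h : IsUnit (a ^ 2 - b ^ 2)) :
    a = 0 ∨ b = 0 := by
  rw [sq_sub_sq, IsUnit.mul_iff, Int.isUnit_iff, Int.isUnit_iff] at h
  omega

theorem sq_add_mul_lt_or_sq_sub_mul_lt {x a b : ℤ} (ha : a ≠ 0) (hb : b ≠ 0)
    (hq : IsUnit (a ^ 2 + x * a * b - b ^ 2)) :
    (a + x * b) ^ 2 < a ^ 2 ∨ (b - x * a) ^ 2 < b ^ 2 := by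
  by_contra! ⟨h₁, h₂⟩
  have hq₁ := Int.isUnit_iff.1 hq
  have ha₁ : 0 < a ^ 2 := by positivity
  have hb₁ : 0 < b ^ 2 := by positivity
  have hxab_nonneg : a ^ 2 ≤ a ^ 2 + x * a * b := by
    rw [← sq_le_sq₀ ha₁.le (by omega)]
    calc (a ^ 2) ^ 2 = a ^ 2 * a ^ 2 := by ring
      _ ≤ a ^ 2 * (a + x * b) ^ 2 := by gcongr
      _ = (a ^ 2 + x * a * b) ^ 2 := by ring
  have hxab_nonpos : b ^ 2 ≤ b ^ 2 - x * a * b := by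
    rw [← sq_le_sq₀ hb₁.le (by omega)]
    calc (b ^ 2) ^ 2 = b ^ 2 * b ^ 2 := by ring
      _ ≤ b ^ 2 * (b - x * a) ^ 2 := by gcongr
      _ = (b ^ 2 - x * a * b) ^ 2 := by ring
  have hab : a ^ 2 - b ^ 2 = a ^ 2 + x * a * b - b ^ 2 := by linarith
  rcases Int.eq_zero_or_eq_zero_of_isUnit_sq_sub_sq (hab ▸ hq) with h | h
  exacts [ha h, hb h]

def quadForm (x : ℤ) (v : Fin 2 → ℤ) : ℤ := v 0 ^ 2 + x * v 0 * v 1 - v 1 ^ 2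

theorem mem_HA_self (A : GL2Z) : A ∈ HA A := Subgroup.subset_closure (Set.mem_insert _ _)

theorem neg_one_mem_HA (A : GL2Z) : -1 ∈ HA A :=
  Subgroup.subset_closure (Set.mem_insert_of_mem _ rfl)

section

variable {x : ℤ} {A : GL2Z}

theorem mulVec_eq_of_coe_eq (hA : (A : Matrix (Fin 2) (Fin 2) ℤ) = !![0, 1; 1, x])
    (v : Fin 2 → ℤ) : (A : Matrix (Fin 2) (Fin 2) ℤ) *ᵥ v = ![v 1, v 0 + x * v 1] := by
  ext i; fin_cases i <;> simp [hA, mulVec, dotProduct]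

theorem inv_mulVec_eq_of_coe_eq (hA : (A : Matrix (Fin 2) (Fin 2) ℤ) = !![0, 1; 1, x])
    (v : Fin 2 → ℤ) :
    ((A⁻¹ : GL2Z) : Matrix (Fin 2) (Fin 2) ℤ) *ᵥ v = ![v 1 - x * v 0, v 0] := by
  have hv : v = (A : Matrix (Fin 2) (Fin 2) ℤ) *ᵥ ![v 1 - x * v 0, v 0] := by
    rw [mulVec_eq_of_coe_eq hA]; ext i; fin_cases i <;> simp
  conv_lhs => rw [hv, mulVec_mulVec, ← Units.val_mul, inv_mul_cancel, Units.val_one, one_mulVec]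

theorem isUnit_quadForm_mulVec_iff (hA : (A : Matrix (Fin 2) (Fin 2) ℤ) = !![0, 1; 1, x])
    {B : GL2Z} (hB : B ∈ HA A) (v : Fin 2 → ℤ) :
    IsUnit (quadForm x ((B : Matrix (Fin 2) (Fin 2) ℤ) *ᵥ v)) ↔ IsUnit (quadForm x v) := by
  induction hB using Subgroup.closure_induction generalizing v with
  | mem B hB =>
    rcases hB with rfl | rfl
    · rw [mulVec_eq_of_coe_eq hA, ← IsUnit.neg_iff]
      congr! 1
      simp only [quadForm, cons_val_zero, cons_val_one, cons_val_fin_one]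
      ring
    · simp [quadForm]
  | one => simp
  | mul B C _ _ hB hC => rw [Units.val_mul, ← mulVec_mulVec, hB, hC]
  | inv B _ hB =>
    rw [← hB, mulVec_mulVec, ← Units.val_mul, mul_inv_cancel, Units.val_one, one_mulVec]

theorem SA_eq_setOf_isUnit_quadForm (hA : (A : Matrix (Fin 2) (Fin 2) ℤ) = !![0, 1; 1, x]) :
    SA A = {v | IsUnit (quadForm x v)} := by
  ext v
  have hdet : v 0 * ((A : Matrix (Fin 2) (Fin 2) ℤ) *ᵥ v) 1 -
      v 1 * ((A : Matrix (Fin 2) (Fin 2) ℤ) *ᵥ v) 0 = quadForm x v := by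
    simp only [mulVec_eq_of_coe_eq hA, quadForm, cons_val_zero, cons_val_one, cons_val_fin_one]
    ring
  rw [SA, Set.mem_ofPred_eq, span_pair_eq_top_iff_isUnit, hdet, Set.mem_ofPred_eq]

theorem exists_mem_HA_mulVec_eq_of_snd_eq_zero (A : GL2Z) {v : Fin 2 → ℤ} (h₁ : v 1 = 0)
    (h₀ : IsUnit (v 0)) : ∃ B ∈ HA A, (B : Matrix (Fin 2) (Fin 2) ℤ) *ᵥ v = ![1, 0] := by
  rcases Int.isUnit_iff.1 h₀ with h | h
  · exact ⟨1, one_mem _, by ext i; fin_cases i <;> simp [h, h₁]⟩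
  · exact ⟨-1, neg_one_mem_HA A, by ext i; fin_cases i <;> simp [h, h₁]⟩

theorem exists_mem_HA_sq_add_sq_lt (hA : (A : Matrix (Fin 2) (Fin 2) ℤ) = !![0, 1; 1, x])
    {v : Fin 2 → ℤ} (h₀ : v 0 ≠ 0) (h₁ : v 1 ≠ 0) (hv : IsUnit (quadForm x v)) :
    ∃ C ∈ HA A, ((C : Matrix (Fin 2) (Fin 2) ℤ) *ᵥ v) 0 ^ 2 +
      ((C : Matrix (Fin 2) (Fin 2) ℤ) *ᵥ v) 1 ^ 2 < v 0 ^ 2 + v 1 ^ 2 := by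
  rcases sq_add_mul_lt_or_sq_sub_mul_lt h₀ h₁ hv with h | h
  · refine ⟨A, mem_HA_self A, ?_⟩
    simp only [mulVec_eq_of_coe_eq hA, cons_val_zero, cons_val_one, cons_val_fin_one]
    linarith
  · refine ⟨A⁻¹, inv_mem (mem_HA_self A), ?_⟩
    simp only [inv_mulVec_eq_of_coe_eq hA, cons_val_zero, cons_val_one, cons_val_fin_one]
    linarith

theorem exists_mem_HA_mulVec_eq_single (hA : (A : Matrix (Fin 2) (Fin 2) ℤ) = !![0, 1; 1, x])
    (v : Fin 2 → ℤ) (hv : IsUnit (quadForm x v)) :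
    ∃ B ∈ HA A, (B : Matrix (Fin 2) (Fin 2) ℤ) *ᵥ v = ![1, 0] := by
  induction hn : (v 0 ^ 2 + v 1 ^ 2).toNat using Nat.strong_induction_on generalizing v with
  | _ n ih =>
    by_cases h₁ : v 1 = 0
    · refine exists_mem_HA_mulVec_eq_of_snd_eq_zero A h₁ ?_
      simpa [quadForm, h₁] using hv
    by_cases h₀ : v 0 = 0
    · have hAv : ((A⁻¹ : GL2Z) : Matrix (Fin 2) (Fin 2) ℤ) *ᵥ v = ![v 1, 0] := by
        rw [inv_mulVec_eq_of_coe_eq hA, h₀]; simp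
      obtain ⟨B, hB, hBv⟩ := exists_mem_HA_mulVec_eq_of_snd_eq_zero A (v := ![v 1, 0]) rfl
        (by simpa [quadForm, h₀] using hv)
      exact ⟨B * A⁻¹, mul_mem hB (inv_mem (mem_HA_self A)),
        by rw [Units.val_mul, ← mulVec_mulVec, hAv, hBv]⟩
    obtain ⟨C, hC, hlt⟩ := exists_mem_HA_sq_add_sq_lt hA h₀ h₁ hv
    have hCv : 0 ≤ ((C : Matrix (Fin 2) (Fin 2) ℤ) *ᵥ v) 0 ^ 2 +
        ((C : Matrix (Fin 2) (Fin 2) ℤ) *ᵥ v) 1 ^ 2 := by positivity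
    obtain ⟨B, hB, hBv⟩ := ih _ (by omega) ((C : Matrix (Fin 2) (Fin 2) ℤ) *ᵥ v)
      ((isUnit_quadForm_mulVec_iff hA hC v).2 hv) rfl
    exact ⟨B * C, mul_mem hB hC, by rwa [Units.val_mul, ← mulVec_mulVec]⟩

end

theorem case_orientation_reversing_general (x : ℤ) (A : GL2Z)
    (hA : (A : Matrix (Fin 2) (Fin 2) ℤ) = !![0, 1; 1, x]) :
    SA A = {v : Fin 2 → ℤ |
      (v 0) ^ 2 + x * v 0 * v 1 - (v 1) ^ 2 = 1 ∨
      (v 0) ^ 2 + x * v 0 * v 1 - (v 1) ^ 2 = -1} ∧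
    (∀ v ∈ SA A, ∀ w ∈ SA A,
      ∃ B ∈ HA A, (B : Matrix (Fin 2) (Fin 2) ℤ).mulVec v = w) := by
  have hS := SA_eq_setOf_isUnit_quadForm hA
  refine ⟨by rw [hS]; ext v; exact Int.isUnit_iff, fun v hv w hw ↦ ?_⟩
  rw [hS] at hv hw
  obtain ⟨Bv, hBv, hv₁⟩ := exists_mem_HA_mulVec_eq_single hA v hv
  obtain ⟨Bw, hBw, hw₁⟩ := exists_mem_HA_mulVec_eq_single hA w hw
  refine ⟨Bw⁻¹ * Bv, mul_mem (inv_mem hBw) hBv, ?_⟩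
  rw [Units.val_mul, ← mulVec_mulVec, hv₁, ← hw₁, mulVec_mulVec, ← Units.val_mul,
    inv_mul_cancel, Units.val_one, one_mulVec]

theorem case_orientation_reversing (x : ℤ) (hx : x ≠ 0) (A : GL2Z)
    (hA : (A : Matrix (Fin 2) (Fin 2) ℤ) = !![0, 1; 1, x]) :
    SA A = {v : Fin 2 → ℤ |
      (v 0) ^ 2 + x * v 0 * v 1 - (v 1) ^ 2 = 1 ∨
      (v 0) ^ 2 + x * v 0 * v 1 - (v 1) ^ 2 = -1} ∧
    (∀ v ∈ SA A, ∀ w ∈ SA A,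
      ∃ B ∈ HA A, (B : Matrix (Fin 2) (Fin 2) ℤ).mulVec v = w) :=
  case_orientation_reversing_general x A hA
end

section
/- Let A ∈ GL₂ℤ and suppose G_A = ℤ² ⋊_A ℤ is generated by two elements. Then every ordered 2-element generating set of G_A is Nielsen equivalent to a pair of the form ((v, 0), ((0,0), 1)) for some v ∈ ℤ² with ℤv + ℤ(Av) = ℤ². -/
/-! The Euclidean algorithm on the images in `ℤ` of the two generators, performed by Nielsen
moves, turns any generating pair into one of the form `((u, 0), (w, 1))`. Since `det A = ±1`,
Cayley–Hamilton makes `M = ℤu + ℤAu` stable under `A` and `A⁻¹`, so `{(m, 0) : m ∈ M}` is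
normalised by both generators. Being normal, it complements `⟨(w, 1)⟩` in `G_A`, which forces
`M = ℤ²`. Finally `w = a u + b Au` and `(u, 0)⁻ᵃ (w, 1) (u, 0)⁻ᵇ = (0, 1)`. -/

open Matrix

/-- The automorphism of `ℤ²` induced by `A ∈ GL₂ℤ`. -/
def glToAddAut (A : GL2Z) : (Fin 2 → ℤ) ≃+ (Fin 2 → ℤ) :=
  (Matrix.GeneralLinearGroup.toLin A).toLinearEquiv.toAddEquiv

/-- The action of `ℤ` on `ℤ²` with `1` acting as `A`. -/
def phiA (A : GL2Z) : Multiplicative ℤ →* MulAut (Multiplicative (Fin 2 → ℤ)) :=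
  zpowersHom _ (AddEquiv.toMultiplicative (glToAddAut A))

/-- `G_A = ℤ² ⋊_A ℤ`. -/
abbrev GA (A : GL2Z) := (Multiplicative (Fin 2 → ℤ)) ⋊[phiA A] (Multiplicative ℤ)

/-- Nielsen equivalence of ordered generating `n`-tuples: the two induced epimorphisms
from the free group differ by precomposition with an automorphism. -/
def NielsenEquiv {G : Type*} [Group G] {n : ℕ} (S T : Fin n → G) : Prop :=
  ∃ φ : FreeGroup (Fin n) ≃* FreeGroup (Fin n),
    (FreeGroup.lift S).comp φ.toMonoidHom = FreeGroup.lift T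

open Multiplicative

theorem Multiplicative.eq_ofAdd_one_or_neg_one_of_zpowers_eq_top {g : Multiplicative ℤ}
    (h : Subgroup.zpowers g = ⊤) : g = ofAdd 1 ∨ g = ofAdd (-1) := by
  obtain ⟨k, hk⟩ := Subgroup.mem_zpowers_iff.mp (h ▸ Subgroup.mem_top (ofAdd (1 : ℤ)))
  have hmul : toAdd g * k = 1 := by simpa [mul_comm] using congrArg toAdd hk
  rcases Int.eq_one_or_neg_one_of_mul_eq_one hmul with h1 | h1
  · exact .inl (congrArg ofAdd h1)
  · exact .inr (congrArg ofAdd h1)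

namespace NielsenEquiv

variable {G : Type*} [Group G] {n : ℕ}

theorem refl (S : Fin n → G) : NielsenEquiv S S :=
  ⟨MulEquiv.refl _, by ext; simp⟩

theorem trans {S T U : Fin n → G} (hST : NielsenEquiv S T) (hTU : NielsenEquiv T U) :
    NielsenEquiv S U := by
  obtain ⟨φ, hφ⟩ := hST
  obtain ⟨ψ, hψ⟩ := hTU
  exact ⟨ψ.trans φ, by rw [← hψ, ← hφ]; rfl⟩

theorem closure_range_eq_top {S T : Fin n → G} (h : NielsenEquiv S T)
    (hS : Subgroup.closure (Set.range S) = ⊤) : Subgroup.closure (Set.range T) = ⊤ := by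
  obtain ⟨φ, hφ⟩ := h
  rw [← FreeGroup.range_lift_eq_closure] at hS ⊢
  rw [← hφ, MonoidHom.range_comp, MonoidHom.range_eq_top_of_surjective _ φ.surjective,
    ← MonoidHom.range_eq_map, hS]

theorem closure_pair_eq_top {x y x' y' : G} (h : NielsenEquiv ![x, y] ![x', y'])
    (hxy : Subgroup.closure {x, y} = ⊤) : Subgroup.closure {x', y'} = ⊤ := by
  have := h.closure_range_eq_top (by rwa [Matrix.range_cons_cons_empty])
  rwa [Matrix.range_cons_cons_empty] at this

section

open FreeGroup

theorem of_inverse (S T : Fin n → G) {f g : Fin n → FreeGroup (Fin n)}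
    (hgf : ∀ i, lift g (f i) = of i) (hfg : ∀ i, lift f (g i) = of i)
    (hT : ∀ i, lift S (f i) = T i) : NielsenEquiv S T :=
  ⟨MonoidHom.toMulEquiv (lift f) (lift g) (ext_hom _ _ fun i => by simp [hgf])
      (ext_hom _ _ fun i => by simp [hfg]),
    ext_hom _ _ fun i => by simp [hT]⟩

theorem swap (x y : G) : NielsenEquiv ![x, y] ![y, x] :=
  of_inverse _ _ (f := ![of 1, of 0]) (g := ![of 1, of 0])
    (by simp [Fin.forall_fin_two]) (by simp [Fin.forall_fin_two]) (by simp [Fin.forall_fin_two])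

theorem inv_snd (x y : G) : NielsenEquiv ![x, y] ![x, y⁻¹] :=
  of_inverse _ _ (f := ![of 0, (of 1)⁻¹]) (g := ![of 0, (of 1)⁻¹])
    (by simp [Fin.forall_fin_two]) (by simp [Fin.forall_fin_two]) (by simp [Fin.forall_fin_two])

theorem mul_snd (x y : G) (a b : ℤ) : NielsenEquiv ![x, y] ![x, x ^ a * y * x ^ b] :=
  of_inverse _ _ (f := ![of 0, of 0 ^ a * of 1 * of 0 ^ b])
    (g := ![of 0, of 0 ^ (-a) * of 1 * of 0 ^ (-b)])
    (by simp [Fin.forall_fin_two]; group) (by simp [Fin.forall_fin_two]; group)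
    (by simp [Fin.forall_fin_two])

end

theorem exists_map_eq_one_and_map_eq_ofAdd_one (π : G →* Multiplicative ℤ)
    (hπ : Function.Surjective π) (x y : G) (h : Subgroup.closure {x, y} = ⊤) :
    ∃ x' y', π x' = 1 ∧ π y' = ofAdd 1 ∧ NielsenEquiv ![x, y] ![x', y'] := by
  induction hn : (toAdd (π x)).natAbs using Nat.strong_induction_on generalizing x y with
  | _ n ih =>
  have hπxy : Subgroup.closure {π x, π y} = ⊤ := by
    rw [← Set.image_pair, ← MonoidHom.map_closure, h, ← MonoidHom.range_eq_map,
      MonoidHom.range_eq_top_of_surjective _ hπ]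
  by_cases hx : π x = 1
  · rw [hx, Subgroup.closure_insert_one, ← Subgroup.zpowers_eq_closure] at hπxy
    rcases Multiplicative.eq_ofAdd_one_or_neg_one_of_zpowers_eq_top hπxy with hy | hy
    · exact ⟨x, y, hx, hy, refl _⟩
    · exact ⟨x, y⁻¹, hx, by simp [hy], inv_snd x y⟩
  · set a := toAdd (π x)
    set b := toAdd (π y)
    have ha : a ≠ 0 := fun ha => hx (toAdd_eq_zero.mp ha)
    have hmove : NielsenEquiv ![x, y] ![y * x ^ (-(b / a)), x] := by
      simpa using (mul_snd x y 0 (-(b / a))).trans (swap _ _)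
    have hrem : toAdd (π (y * x ^ (-(b / a)))) = b % a := by
      simp only [map_mul, map_zpow, toAdd_mul, toAdd_zpow, Int.emod_def]
      ring
    have hlt : (b % a).natAbs < n := by
      have := Int.emod_nonneg b ha
      have := Int.emod_lt b ha
      omega
    obtain ⟨x', y', hx', hy', h'⟩ :=
      ih _ hlt _ _ (hmove.closure_pair_eq_top h) (by rw [hrem])
    exact ⟨x', y', hx', hy', hmove.trans h'⟩

end NielsenEquiv

open SemidirectProduct

theorem SemidirectProduct.mul_inl_mul_inv {N H : Type*} [CommGroup N] [Group H]
    {φ : H →* MulAut N} (g : N ⋊[φ] H) (n : N) : g * inl n * g⁻¹ = inl (φ g.right n) := by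
  ext <;> simp [mul_comm]

theorem SemidirectProduct.mem_map_inl {N H : Type*} [Group N] [Group H]
    {φ : H →* MulAut N} {K : Subgroup N} {g : N ⋊[φ] H} :
    g ∈ K.map inl ↔ g.right = 1 ∧ g.left ∈ K := by
  constructor
  · rintro ⟨k, hk, rfl⟩
    simpa using hk
  · rintro ⟨h1, h2⟩
    exact ⟨g.left, h2, by ext <;> simp [h1]⟩

theorem Matrix.adjugate_fin_two_eq {R : Type*} [CommRing R] (B : Matrix (Fin 2) (Fin 2) R) :
    adjugate B = trace B • 1 - B := by
  ext i j
  fin_cases i <;> fin_cases j <;> simp [adjugate_fin_two, trace_fin_two]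

theorem phiA_ofAdd_one_apply (A : GL2Z) (z : Fin 2 → ℤ) :
    phiA A (ofAdd 1) (ofAdd z) = ofAdd ((A : Matrix (Fin 2) (Fin 2) ℤ) *ᵥ z) := rfl

theorem Matrix.mulVec_mem_span_pair_iff {R : Type*} [CommRing R]
    {B : Matrix (Fin 2) (Fin 2) R} (hB : IsUnit B.det) (u z : Fin 2 → R) :
    B *ᵥ z ∈ Submodule.span R {u, B *ᵥ u} ↔ z ∈ Submodule.span R {u, B *ᵥ u} := by
  set M := Submodule.span R {u, B *ᵥ u}
  have hadj (z : Fin 2 → R) : B.adjugate *ᵥ z = B.trace • z - B *ᵥ z := by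
    rw [adjugate_fin_two_eq, sub_mulVec, smul_mulVec, one_mulVec]
  have hBM : ∀ z ∈ M, B *ᵥ z ∈ M := by
    suffices M ≤ M.comap (toLin' B) from fun z hz => this hz
    rw [Submodule.span_le, Set.insert_subset_iff, Set.singleton_subset_iff]
    refine ⟨Submodule.subset_span (by simp), ?_⟩
    have cayley_hamilton : B *ᵥ B *ᵥ u = B.trace • B *ᵥ u - B.det • u := by
      have := congrArg (· *ᵥ u) (mul_adjugate B)
      simp only [← mulVec_mulVec, hadj, mulVec_sub, mulVec_smul, smul_mulVec, one_mulVec] at this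
      rw [← this]; abel
    simp only [SetLike.mem_coe, Submodule.mem_comap, toLin'_apply, cayley_hamilton]
    exact M.sub_mem (M.smul_mem _ (Submodule.subset_span (by simp)))
      (M.smul_mem _ (Submodule.subset_span (by simp)))
  refine ⟨fun h => ?_, hBM z⟩
  have hdet : B.det • z ∈ M := by
    rw [← one_mulVec z, ← smul_mulVec, ← adjugate_mul, ← mulVec_mulVec, hadj]
    exact M.sub_mem (M.smul_mem _ h) (hBM _ h)
  exact (M.smul_mem_iff_of_isUnit hB).mp hdet

theorem span_pair_mulVec_eq_top (A : GL2Z) {u w : Fin 2 → ℤ}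
    (h : Subgroup.closure {(⟨ofAdd u, 1⟩ : GA A), ⟨ofAdd w, ofAdd 1⟩} = ⊤) :
    Submodule.span ℤ {u, (A : Matrix (Fin 2) (Fin 2) ℤ) *ᵥ u} = ⊤ := by
  set M := Submodule.span ℤ {u, (A : Matrix (Fin 2) (Fin 2) ℤ) *ᵥ u}
  set y : GA A := ⟨ofAdd w, ofAdd 1⟩
  set P : Subgroup (GA A) := (AddSubgroup.toSubgroup M.toAddSubgroup).map inl
  have hP {g : GA A} : g ∈ P ↔ g.right = 1 ∧ toAdd g.left ∈ M := mem_map_inl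
  have hyP : y ∈ Subgroup.normalizer (P : Set (GA A)) := by
    refine Subgroup.mem_normalizer_iff.mpr fun g => ?_
    rw [hP, hP, mul_right, mul_right, inv_right, mul_inv_cancel_comm]
    refine and_congr_right fun hg => ?_
    rw [← inl_left_mul_inr_right g, hg, map_one, mul_one, mul_inl_mul_inv, left_inl]
    exact (mulVec_mem_span_pair_iff (isUnits_det_units A) _ _).symm
  have hPn : P.Normal := Subgroup.normalizer_eq_top_iff.mp <| by
    rw [eq_top_iff, ← h, Subgroup.closure_le, Set.insert_subset_iff, Set.singleton_subset_iff]
    exact ⟨Subgroup.le_normalizer (hP.mpr ⟨rfl, Submodule.subset_span (by simp)⟩), hyP⟩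
  have hsup : P ⊔ Subgroup.zpowers y = ⊤ := by
    rw [eq_top_iff, ← h, Subgroup.closure_le, Set.insert_subset_iff, Set.singleton_subset_iff]
    exact ⟨Subgroup.mem_sup_left (hP.mpr ⟨rfl, Submodule.subset_span (by simp)⟩),
      Subgroup.mem_sup_right (Subgroup.mem_zpowers y)⟩
  refine eq_top_iff.mpr fun z _ => ?_
  have hz : inl (ofAdd z) ∈ (↑(P ⊔ Subgroup.zpowers y) : Set (GA A)) := by simp [hsup]
  rw [Subgroup.normal_mul] at hz
  obtain ⟨p, hp, _, ⟨k, rfl⟩, hpk⟩ := hz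
  beta_reduce at hpk
  have hk : k = 0 := by
    have := congrArg rightHom hpk
    rw [map_mul, map_zpow, rightHom_inl, rightHom_eq_right, (hP.mp hp).1, one_mul] at this
    simpa [y] using congrArg toAdd this
  simp only [hk, zpow_zero, mul_one] at hpk
  exact (hP.mp (hpk ▸ hp)).2

theorem nielsenEquiv_of_mem_span_pair (A : GL2Z) {u w : Fin 2 → ℤ}
    (hw : w ∈ Submodule.span ℤ {u, (A : Matrix (Fin 2) (Fin 2) ℤ) *ᵥ u}) :
    NielsenEquiv ![(⟨ofAdd u, 1⟩ : GA A), ⟨ofAdd w, ofAdd 1⟩]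
      ![⟨ofAdd u, 1⟩, ⟨1, ofAdd 1⟩] := by
  obtain ⟨a, b, rfl⟩ := Submodule.mem_span_pair.mp hw
  have hpow (k : ℤ) : (inl (ofAdd u) : GA A) ^ k = inl (ofAdd (k • u)) := by
    rw [ofAdd_zsmul, map_zpow]
  have key : (inl (ofAdd u) : GA A) ^ (-a) *
      ⟨ofAdd (a • u + b • (A : Matrix (Fin 2) (Fin 2) ℤ) *ᵥ u), ofAdd 1⟩ *
      (inl (ofAdd u)) ^ (-b) = ⟨1, ofAdd 1⟩ := by
    rw [hpow, hpow]
    ext : 1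
    · rw [mul_left, mul_left, right_inl, map_one, MulAut.one_apply, mul_right, left_inl, left_inl,
        right_inl, one_mul, phiA_ofAdd_one_apply, ← ofAdd_add, ← ofAdd_add, mulVec_smul]
      rw [← ofAdd_zero]
      congr 1
      module
    · rfl
  have := NielsenEquiv.mul_snd (inl (ofAdd u) : GA A)
    ⟨ofAdd (a • u + b • (A : Matrix (Fin 2) (Fin 2) ℤ) *ᵥ u), ofAdd 1⟩ (-a) (-b)
  rwa [key] at this

theorem generating_pair_normal_form_general (A : GL2Z) :
    ∀ S : Fin 2 → GA A, Subgroup.closure (Set.range S) = ⊤ →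
      ∃ v : Fin 2 → ℤ,
        Submodule.span ℤ ({v, (A : Matrix (Fin 2) (Fin 2) ℤ).mulVec v} : Set (Fin 2 → ℤ)) = ⊤ ∧
        NielsenEquiv S ![⟨Multiplicative.ofAdd v, 1⟩, ⟨1, Multiplicative.ofAdd 1⟩] := by
  intro S hS
  have hS2 : S = ![S 0, S 1] := (FinVec.etaExpand_eq S).symm
  rw [hS2, range_cons_cons_empty] at hS
  rw [hS2]
  obtain ⟨⟨xl, xr⟩, ⟨yl, yr⟩, hx, hy, hxy⟩ :=
    NielsenEquiv.exists_map_eq_one_and_map_eq_ofAdd_one rightHom rightHom_surjective _ _ hS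
  obtain rfl : xr = 1 := hx
  obtain rfl : yr = ofAdd 1 := hy
  have hspan := span_pair_mulVec_eq_top A (u := toAdd xl) (w := toAdd yl)
    (hxy.closure_pair_eq_top hS)
  exact ⟨toAdd xl, hspan,
    hxy.trans (nielsenEquiv_of_mem_span_pair A (hspan ▸ Submodule.mem_top))⟩

theorem generating_pair_normal_form (A : GL2Z)
    (h2 : ∃ x y : GA A, Subgroup.closure ({x, y} : Set (GA A)) = ⊤) :
    ∀ S : Fin 2 → GA A, Subgroup.closure (Set.range S) = ⊤ →
      ∃ v : Fin 2 → ℤ,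
        Submodule.span ℤ ({v, (A : Matrix (Fin 2) (Fin 2) ℤ).mulVec v} : Set (Fin 2 → ℤ)) = ⊤ ∧
        NielsenEquiv S ![⟨Multiplicative.ofAdd v, 1⟩, ⟨1, Multiplicative.ofAdd 1⟩] :=
  generating_pair_normal_form_general A
end
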